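/- The map x: ℂ → ℝ⁷ defined (for λ = 1) by x(z) = (1/D)·(1 - r² - 3r⁴/4 + 4r⁶/9 - r⁸/36, -i(z - z̄)(1 + r⁶/9), (z + z̄)(1 + r⁶/9), -i(z² - z̄²)(1 - r⁴/12), (z² + z̄²)(1 - r⁴/12), -i(r²/2)(z - z̄)(1 + 4r²/3), (r²/2)(z + z̄)(1 + 4r²/3)), where r = |z| and D = 1 + r² + 5r⁴/4 + 4r⁶/9 + r⁸/36, takes values in the unit sphere S⁶ ⊂ ℝ⁷, i.e., |x(z)|² = 1 for all z ∈ ℂ. -/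

import Mathlib

open Complex

/-- The denominator `D = 1 + r² + 5r⁴/4 + 4r⁶/9 + r⁸/36` with `r = |z|`. -/
noncomputable def Dfun (z : ℂ) : ℂ :=
  1 + (‖z‖ : ℂ) ^ 2 + 5 * (‖z‖ : ℂ) ^ 4 / 4
    + 4 * (‖z‖ : ℂ) ^ 6 / 9 + (‖z‖ : ℂ) ^ 8 / 36

/-- The Willmore two-sphere `x : ℂ → ℝ⁷ ⊂ ℂ⁷` (for `λ = 1`). -/
noncomputable def xmap (z : ℂ) : Fin 7 → ℂ :=
  let r : ℂ := (‖z‖ : ℂ)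
  (Dfun z)⁻¹ • ![
    1 - r ^ 2 - 3 * r ^ 4 / 4 + 4 * r ^ 6 / 9 - r ^ 8 / 36,
    -I * (z - (starRingEnd ℂ) z) * (1 + r ^ 6 / 9),
    (z + (starRingEnd ℂ) z) * (1 + r ^ 6 / 9),
    -I * (z ^ 2 - ((starRingEnd ℂ) z) ^ 2) * (1 - r ^ 4 / 12),
    (z ^ 2 + ((starRingEnd ℂ) z) ^ 2) * (1 - r ^ 4 / 12),
    -I * (r ^ 2 / 2) * (z - (starRingEnd ℂ) z) * (1 + 4 * r ^ 2 / 3),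
    (r ^ 2 / 2) * (z + (starRingEnd ℂ) z) * (1 + 4 * r ^ 2 / 3)]

/-!
Since `z - z̄ = 2i·Im z` and `z + z̄ = 2·Re z`, and likewise for `z²`, every component of `x(z)` is
real. Using `(Re z)² + (Im z)² = r²` and `(Re z²)² + (Im z²)² = r⁴`, the squared norm of the
numerator vector becomes a polynomial in `r`, and `|x(z)|² = 1` reduces to the identity
`P(r)² + 4r²(1 + r⁶/9)² + 4r⁴(1 - r⁴/12)² + r⁶(1 + 4r²/3)² = D(r)²`, `P` the first numerator.
-/

theorem sum_sq_numerators_eq_sq_denominator {K : Type*} [Field K] [CharZero K] (r : K) :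
    (1 - r ^ 2 - 3 * r ^ 4 / 4 + 4 * r ^ 6 / 9 - r ^ 8 / 36) ^ 2
      + 4 * r ^ 2 * (1 + r ^ 6 / 9) ^ 2 + 4 * r ^ 4 * (1 - r ^ 4 / 12) ^ 2
      + r ^ 6 * (1 + 4 * r ^ 2 / 3) ^ 2
      = (1 + r ^ 2 + 5 * r ^ 4 / 4 + 4 * r ^ 6 / 9 + r ^ 8 / 36) ^ 2 := by
  ring

theorem Complex.re_sq_add_im_sq (w : ℂ) : w.re ^ 2 + w.im ^ 2 = ‖w‖ ^ 2 := by
  rw [Complex.sq_norm, normSq_apply]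
  ring

noncomputable def xmapReal (z : ℂ) : Fin 7 → ℝ :=
  let r := ‖z‖
  (1 + r ^ 2 + 5 * r ^ 4 / 4 + 4 * r ^ 6 / 9 + r ^ 8 / 36)⁻¹ • ![
    1 - r ^ 2 - 3 * r ^ 4 / 4 + 4 * r ^ 6 / 9 - r ^ 8 / 36,
    2 * z.im * (1 + r ^ 6 / 9),
    2 * z.re * (1 + r ^ 6 / 9),
    2 * (z ^ 2).im * (1 - r ^ 4 / 12),
    2 * (z ^ 2).re * (1 - r ^ 4 / 12),
    r ^ 2 * z.im * (1 + 4 * r ^ 2 / 3),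
    r ^ 2 * z.re * (1 + 4 * r ^ 2 / 3)]

theorem xmap_eq_ofReal_xmapReal (z : ℂ) : xmap z = fun j ↦ (xmapReal z j : ℂ) := by
  funext j
  fin_cases j <;>
    simp only [xmap, xmapReal, Dfun, sub_conj, add_conj, ← map_pow, Pi.smul_apply,
      smul_eq_mul] <;>
    push_cast <;> ring_nf <;> simp only [I_sq] <;> ring

theorem sum_sq_xmapReal (z : ℂ) : ∑ j, xmapReal z j ^ 2 = 1 := by
  have h1 := re_sq_add_im_sq z
  have h2 : (z ^ 2).re ^ 2 + (z ^ 2).im ^ 2 = ‖z‖ ^ 4 := by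
    rw [re_sq_add_im_sq, norm_pow]
    ring
  have hD : (1 + ‖z‖ ^ 2 + 5 * ‖z‖ ^ 4 / 4 + 4 * ‖z‖ ^ 6 / 9 + ‖z‖ ^ 8 / 36) ^ 2 ≠ 0 := by
    positivity
  simp only [xmapReal, Pi.smul_apply, smul_eq_mul, mul_pow, ← Finset.mul_sum, inv_pow,
    inv_mul_eq_one₀ hD]
  simp only [Fin.sum_univ_seven, Matrix.cons_val]
  symm
  linear_combination (4 * (1 + ‖z‖ ^ 6 / 9) ^ 2 + ‖z‖ ^ 4 * (1 + 4 * ‖z‖ ^ 2 / 3) ^ 2) * h1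
    + 4 * (1 - ‖z‖ ^ 4 / 12) ^ 2 * h2 + sum_sq_numerators_eq_sq_denominator ‖z‖

/-- `x` takes values in the unit sphere `S⁶ ⊂ ℝ⁷`: each component is real and
`|x(z)|² = 1` for all `z ∈ ℂ`. -/
theorem xmap_mem_sphere (z : ℂ) :
    (∀ j, (xmap z j).im = 0) ∧ ∑ j, Complex.normSq (xmap z j) = 1 := by
  rw [xmap_eq_ofReal_xmapReal]
  refine ⟨fun j ↦ ofReal_im _, ?_⟩
  simpa only [normSq_ofReal, ← sq] using sum_sq_xmapReal z
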